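/- Let γ : ℝ → ℝ be continuous with s·γ(s) ≥ 0 for all s, and suppose there exists a strictly increasing continuous function α : ℝ≥0 → ℝ≥0 with α(0) = 0 such that |γ(s)| ≥ α(|s|) for all s. Then for every r > 0, ρ(r) := (1/(2π)) ∫₀^{2π} γ(r·sin φ)·sin φ dφ > 0. -/

import Mathlib

open Real

noncomputable def rho (γ : ℝ → ℝ) (r : ℝ) : ℝ :=
  (1 / (2 * π)) * ∫ φ in (0:ℝ)..(2 * π), γ (r * Real.sin φ) * Real.sin φ

/-
The sign condition makes the integrand `γ (r sin φ) sin φ` nonnegative everywhere,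
and the lower bound by the strictly increasing `α` forces `γ s > 0` for `s > 0`, so the integrand
is strictly positive on `(0, π)`. Hence already the integral over `[0, π]` is positive.
-/

theorem intervalIntegral_pos_of_nonneg_of_pos_on_Ioo {f : ℝ → ℝ} (hf : Continuous f)
    (hf_nonneg : ∀ x, 0 ≤ f x) {a b c : ℝ} (hab : a < b) (hbc : b ≤ c)
    (hf_pos : ∀ x ∈ Set.Ioo a b, 0 < f x) :
    0 < ∫ x in a..c, f x := by
  have h_ab : 0 < ∫ x in a..b, f x :=
    intervalIntegral.intervalIntegral_pos_of_pos_on (hf.intervalIntegrable a b) hf_pos hab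
  have h_bc : 0 ≤ ∫ x in b..c, f x :=
    intervalIntegral.integral_nonneg hbc fun x _ => hf_nonneg x
  rw [← intervalIntegral.integral_add_adjacent_intervals (hf.intervalIntegrable a b)
    (hf.intervalIntegrable b c)]
  exact add_pos_of_pos_of_nonneg h_ab h_bc

theorem pos_of_mul_nonneg_of_abs_lower_bound {γ : ℝ → ℝ} (hsgn : ∀ s : ℝ, 0 ≤ s * γ s)
    {α : NNReal → NNReal} (hα_mono : StrictMono α)
    (hbound : ∀ s : ℝ, (α (Real.nnabs s) : ℝ) ≤ |γ s|) {s : ℝ} (hs : 0 < s) :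
    0 < γ s := by
  have hα_pos : 0 < α (Real.nnabs s) :=
    pos_of_gt (hα_mono (show 0 < Real.nnabs s by simpa using hs.ne'))
  have hγ_ne : γ s ≠ 0 := abs_pos.mp (lt_of_lt_of_le (mod_cast hα_pos) (hbound s))
  exact lt_of_le_of_ne ((mul_nonneg_iff_of_pos_left hs).mp (hsgn s)) hγ_ne.symm

theorem apply_const_mul_mul_nonneg {γ : ℝ → ℝ} (hsgn : ∀ s : ℝ, 0 ≤ s * γ s)
    {r : ℝ} (hr : 0 < r) (x : ℝ) :
    0 ≤ γ (r * x) * x := by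
  rw [mul_comm]
  exact (mul_nonneg_iff_of_pos_left hr).mp (by simpa only [mul_assoc] using hsgn (r * x))

theorem stmt_4_general (γ : ℝ → ℝ) (hγ : Continuous γ)
    (hsgn : ∀ s : ℝ, 0 ≤ s * γ s)
    (α : NNReal → NNReal) (hα_mono : StrictMono α)
    (hbound : ∀ s : ℝ, (α (Real.nnabs s) : ℝ) ≤ |γ s|)
    (r : ℝ) (hr : 0 < r) :
    0 < rho γ r := by
  refine mul_pos (by positivity) (intervalIntegral_pos_of_nonneg_of_pos_on_Ioo ?_ ?_ pi_pos
    (by linarith [pi_pos] : π ≤ 2 * π) fun φ hφ => ?_)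
  · exact (hγ.comp (continuous_const.mul continuous_sin)).mul continuous_sin
  · exact fun φ => apply_const_mul_mul_nonneg hsgn hr (sin φ)
  · have hsin : 0 < sin φ := sin_pos_of_pos_of_lt_pi hφ.1 hφ.2
    exact mul_pos (pos_of_mul_nonneg_of_abs_lower_bound hsgn hα_mono hbound (mul_pos hr hsin)) hsin

theorem stmt_4 (γ : ℝ → ℝ) (hγ : Continuous γ)
    (hsgn : ∀ s : ℝ, 0 ≤ s * γ s)
    (α : NNReal → NNReal) (hα_mono : StrictMono α) (hα_cont : Continuous α)
    (hα0 : α 0 = 0)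
    (hbound : ∀ s : ℝ, (α (Real.nnabs s) : ℝ) ≤ |γ s|)
    (r : ℝ) (hr : 0 < r) :
    0 < rho γ r :=
  stmt_4_general γ hγ hsgn α hα_mono hbound r hr
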